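/- Let G0 be the ADMG with vertex set {A1, A2, W, Y}, directed edges W→A1, A1→Y, A2→Y, and bidirected edges W↔A2 and W↔Y. Then the set {W, Y} is not reachable in G0, and its reachable closure is ⟨{W, Y}⟩ = {W, Y, A2}. Consequently, for Y' = {Y} and A' = {A2}, the set Y'* equals {Y, A1, W}, and the district {W, Y} of the induced subgraph (G0)_{Y'*} is not an intrinsic set of G0. -/

import Mathlib

/-- A conditional acyclic directed mixed graph (CADMG) on vertex type `V`:
a directed edge relation `dir` with no directed cycles, a symmetric irreflexive
bidirected edge relation `bi`, and a set `rnd` of random vertices (the remaining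
vertices being fixed), such that no directed edge points into a fixed vertex and
no bidirected edge is incident to a fixed vertex.  An ADMG is the special case
`rnd = Set.univ`. -/
structure CADMG (V : Type*) where
  dir : V → V → Prop
  bi : V → V → Prop
  rnd : Set V
  acyclic : ∀ v, ¬ Relation.TransGen dir v v
  bi_symm : ∀ a b, bi a b → bi b a
  bi_irrefl : ∀ a, ¬ bi a a
  dir_rnd : ∀ a b, dir a b → b ∈ rnd
  bi_rnd : ∀ a b, bi a b → a ∈ rnd ∧ b ∈ rnd

namespace CADMG

variable {V : Type*}

/-- A random vertex `r` is fixable if there is no other vertex `w` with both a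
directed path from `r` to `w` and a bidirected path from `r` to `w`. -/
def Fixable (G : CADMG V) (r : V) : Prop :=
  r ∈ G.rnd ∧
    ¬ ∃ w, w ≠ r ∧ Relation.ReflTransGen G.dir r w ∧ Relation.ReflTransGen G.bi r w

/-- The fixing operator: move `r` from the random to the fixed vertices and delete
all directed edges into `r` and all bidirected edges incident to `r`. -/
def fix (G : CADMG V) (r : V) : CADMG V where
  dir a b := G.dir a b ∧ b ≠ r
  bi a b := G.bi a b ∧ a ≠ r ∧ b ≠ r
  rnd := G.rnd \ {r}
  acyclic v h := G.acyclic v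
    (Relation.TransGen.mono (fun (a b : V) (hab : G.dir a b ∧ b ≠ r) => hab.1) v v h)
  bi_symm a b h := ⟨G.bi_symm a b h.1, h.2.2, h.2.1⟩
  bi_irrefl a h := G.bi_irrefl a h.1
  dir_rnd a b h := ⟨G.dir_rnd a b h.1, h.2⟩
  bi_rnd a b h := ⟨⟨(G.bi_rnd a b h.1).1, h.2.1⟩, (G.bi_rnd a b h.1).2, h.2.2⟩

/-- A sequence of vertices is a valid fixing sequence if it is empty, or its head is
fixable and its tail is valid in the graph obtained by fixing the head. -/
def Valid (G : CADMG V) : List V → Prop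
  | [] => True
  | r :: rest => G.Fixable r ∧ (G.fix r).Valid rest

/-- `φ_σ(G)`: the CADMG obtained by applying the fixing operators along the list `σ`. -/
def fixList (G : CADMG V) : List V → CADMG V
  | [] => G
  | r :: rest => (G.fix r).fixList rest

/-- A set `R` of random vertices is reachable if some ordering of the remaining random
vertices is a valid fixing sequence. -/
def Reachable (G : CADMG V) (R : Set V) : Prop :=
  ∃ σ : List V, G.Valid σ ∧ ∀ v, v ∈ σ ↔ v ∈ G.rnd \ R

/-- `C` is the reachable closure of `S`: the smallest reachable superset of `S`. -/
def IsReachableClosure (G : CADMG V) (S C : Set V) : Prop :=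
  G.Reachable C ∧ S ⊆ C ∧ ∀ T, G.Reachable T → S ⊆ T → C ⊆ T

/-- `D` is bidirected-connected (within `D` itself): `D` is nonempty and any two of its
elements are joined by a bidirected path staying inside `D`. -/
def BiConnected (G : CADMG V) (D : Set V) : Prop :=
  D.Nonempty ∧ ∀ a ∈ D, ∀ b ∈ D,
    Relation.ReflTransGen (fun x y => G.bi x y ∧ x ∈ D ∧ y ∈ D) a b

/-- An intrinsic set: reachable and bidirected-connected. -/
def Intrinsic (G : CADMG V) (R : Set V) : Prop :=
  G.Reachable R ∧ G.BiConnected R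

/-- The induced subgraph on a set `W` of vertices (vertices outside `W` become fixed
and lose all their edges). -/
def induce (G : CADMG V) (W : Set V) : CADMG V where
  dir a b := G.dir a b ∧ a ∈ W ∧ b ∈ W
  bi a b := G.bi a b ∧ a ∈ W ∧ b ∈ W
  rnd := G.rnd ∩ W
  acyclic v h := G.acyclic v
    (Relation.TransGen.mono (fun (a b : V) (hab : G.dir a b ∧ a ∈ W ∧ b ∈ W) => hab.1) v v h)
  bi_symm a b h := ⟨G.bi_symm a b h.1, h.2.2, h.2.1⟩
  bi_irrefl a h := G.bi_irrefl a h.1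
  dir_rnd a b h := ⟨G.dir_rnd a b h.1, h.2.2⟩
  bi_rnd a b h := ⟨⟨(G.bi_rnd a b h.1).1, h.2.1⟩, (G.bi_rnd a b h.1).2, h.2.2⟩

/-- The districts of a CADMG: the connected components of its random vertices under
the bidirected edge relation. -/
def District (G : CADMG V) (D : Set V) : Prop :=
  ∃ v ∈ G.rnd, D = {w | Relation.ReflTransGen G.bi v w}

/-- `Y*`: the set of vertices having a directed path (possibly of length zero) to an
element of `Y` that does not intersect `A`. -/
def Ystar (G : CADMG V) (A Y : Set V) : Set V :=
  {v | ∃ y ∈ Y, Relation.ReflTransGen (fun a b => G.dir a b ∧ a ∉ A ∧ b ∉ A) v y}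

/-- `F` is an `R`-rooted C-forest: `R ⊆ F`, `F` is bidirected-connected in the induced
subgraph `G_F`, and there is a subgraph of `G_F` with vertex set `F` and a subset `E` of
its directed edges in which every element of `F` has a directed path (possibly of
length zero) to an element of `R`. -/
def CForest (G : CADMG V) (R F : Set V) : Prop :=
  R ⊆ F ∧ G.BiConnected F ∧
    ∃ E : V → V → Prop,
      (∀ a b, E a b → G.dir a b ∧ a ∈ F ∧ b ∈ F) ∧
      ∀ f ∈ F, ∃ r ∈ R, Relation.ReflTransGen E f r

/-- A hedge for `(Y, A)` in `G`: a pair `(F, F')` of `R`-rooted C-forests, for some common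
root set `R`, with `F ⊊ F'`, `F ∩ A = ∅`, `A ∩ (F' \ F) ≠ ∅`, and every element of `R`
has a directed path to an element of `Y` that does not intersect `A`. -/
def Hedge (G : CADMG V) (Y A : Set V) : Prop :=
  ∃ R F F', G.CForest R F ∧ G.CForest R F' ∧ F ⊂ F' ∧ F ∩ A = ∅ ∧
    (A ∩ (F' \ F)).Nonempty ∧
    ∀ r ∈ R, ∃ y ∈ Y, Relation.ReflTransGen (fun a b => G.dir a b ∧ a ∉ A ∧ b ∉ A) r y

end CADMG

/-- The vertex set of the counterexample graph `G0`. -/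
inductive Vtx : Type
  | A1 | A2 | W | Y

/-- Directed edges of `G0`: `W → A1`, `A1 → Y`, `A2 → Y`. -/
def dir0 (a b : Vtx) : Prop :=
  (a = .W ∧ b = .A1) ∨ (a = .A1 ∧ b = .Y) ∨ (a = .A2 ∧ b = .Y)

/-- Bidirected edges of `G0`: `W ↔ A2` and `W ↔ Y`. -/
def bi0 (a b : Vtx) : Prop :=
  (a = .W ∧ b = .A2) ∨ (a = .A2 ∧ b = .W) ∨ (a = .W ∧ b = .Y) ∨ (a = .Y ∧ b = .W)

/-! `A1` has no bidirected edge, so it is fixable and fixing it alone reaches `{W, Y, A2}`.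
Conversely `A2 → Y` and `A2 ↔ W ↔ Y` form a bow at `A2` that survives as long as `W` and `Y`
are random, so every reachable set containing `W` and `Y` contains `A2`. Hence `{W, Y}`, the
district of `W` in `(G0)_{Y'*}`, is not reachable and in particular not intrinsic. -/

open Relation

namespace CADMG

variable {V : Type*}

@[simp]
lemma fixList_dir (G : CADMG V) (τ : List V) (a b : V) :
    (G.fixList τ).dir a b ↔ G.dir a b ∧ b ∉ τ := by
  induction τ generalizing G with
  | nil => simp [fixList]
  | cons r τ ih => simp only [fixList, ih, fix, List.mem_cons, not_or]; tauto

@[simp]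
lemma fixList_bi (G : CADMG V) (τ : List V) (a b : V) :
    (G.fixList τ).bi a b ↔ G.bi a b ∧ a ∉ τ ∧ b ∉ τ := by
  induction τ generalizing G with
  | nil => simp [fixList]
  | cons r τ ih => simp only [fixList, ih, fix, List.mem_cons, not_or]; tauto

variable {G : CADMG V}

lemma Valid.exists_fixable {σ : List V} (hσ : G.Valid σ) {r : V} (hr : r ∈ σ) :
    ∃ τ ⊆ σ, r ∉ τ ∧ (G.fixList τ).Fixable r := by
  induction σ generalizing G with
  | nil => cases hr
  | cons s σ ih =>
    by_cases hrs : r = s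
    · exact ⟨[], List.nil_subset _, List.not_mem_nil, hrs ▸ hσ.1⟩
    · obtain ⟨τ, hτσ, hrτ, hfix⟩ := ih hσ.2 (List.mem_of_ne_of_mem hrs hr)
      exact ⟨s :: τ, List.cons_subset_cons s hτσ, by simp [hrs, hrτ], hfix⟩

/-- The vertex `r` is fixed at some stage of a valid sequence reaching `R`; the edges among
`insert r R` are never deleted before that stage, so they cannot form a bow at `r`. -/
theorem Reachable.fixable_induce_insert {R : Set V} (hR : G.Reachable R) {r : V}
    (hr : r ∈ G.rnd \ R) : (G.induce (insert r R)).Fixable r := by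
  obtain ⟨σ, hσ, hmem⟩ := hR
  obtain ⟨τ, hτσ, hrτ, -, hbow⟩ := hσ.exists_fixable ((hmem r).2 hr)
  have h_notin : ∀ v ∈ insert r R, v ∉ τ := by
    rintro v (rfl | hv) hvτ
    · exact hrτ hvτ
    · exact ((hmem v).1 (hτσ hvτ)).2 hv
  refine ⟨⟨hr.1, Set.mem_insert r R⟩, ?_⟩
  rintro ⟨w, hwr, hdir, hbi⟩
  refine hbow ⟨w, hwr, ReflTransGen.mono ?_ _ _ hdir, ReflTransGen.mono ?_ _ _ hbi⟩
  · rintro a b ⟨hab, -, hb⟩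
    exact (fixList_dir G τ a b).2 ⟨hab, h_notin b hb⟩
  · rintro a b ⟨hab, ha, hb⟩
    exact (fixList_bi G τ a b).2 ⟨hab, h_notin a ha, h_notin b hb⟩

lemma fixable_of_forall_not_bi {r : V} (hr : r ∈ G.rnd) (hbi : ∀ v, ¬ G.bi r v) :
    G.Fixable r := by
  refine ⟨hr, ?_⟩
  rintro ⟨w, hwr, -, hpath⟩
  rcases hpath.cases_head with rfl | ⟨v, hrv, -⟩
  · exact hwr rfl
  · exact hbi v hrv

lemma Fixable.reachable_rnd_diff_singleton {r : V} (hr : G.Fixable r) :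
    G.Reachable (G.rnd \ {r}) :=
  ⟨[r], ⟨hr, trivial⟩, fun v => by by_cases hv : v = r <;> simp [hv, hr.1]⟩

lemma subset_Ystar (A Y : Set V) : Y ⊆ G.Ystar A Y :=
  fun y hy => ⟨y, hy, .refl⟩

lemma mem_Ystar_of_dir {A Y : Set V} {a b : V} (hab : G.dir a b) (ha : a ∉ A) (hb : b ∉ A)
    (hbY : b ∈ G.Ystar A Y) : a ∈ G.Ystar A Y :=
  let ⟨y, hy, hpath⟩ := hbY
  ⟨y, hy, .head ⟨hab, ha, hb⟩ hpath⟩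

lemma mem_of_mem_Ystar_of_mem {A Y : Set V} {v : V} (hv : v ∈ G.Ystar A Y) (hvA : v ∈ A) :
    v ∈ Y := by
  obtain ⟨y, hy, hpath⟩ := hv
  rcases hpath.cases_head with rfl | ⟨_, ⟨-, hv, -⟩, -⟩
  · exact hy
  · exact absurd hvA hv

end CADMG

section G0

open CADMG

lemma G0_rnd_eq_univ (G0 : CADMG Vtx) (hdir : ∀ a b, G0.dir a b ↔ dir0 a b)
    (hbi : ∀ a b, G0.bi a b ↔ bi0 a b) : G0.rnd = Set.univ := by
  have hWA2 := G0.bi_rnd _ _ ((hbi .W .A2).2 (by simp [bi0]))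
  refine Set.eq_univ_of_forall fun v => ?_
  cases v
  · exact G0.dir_rnd _ _ ((hdir .W .A1).2 (by simp [dir0]))
  · exact hWA2.2
  · exact hWA2.1
  · exact G0.dir_rnd _ _ ((hdir .A2 .Y).2 (by simp [dir0]))

lemma G0_A2_mem_of_reachable (G0 : CADMG Vtx) (hdir : ∀ a b, G0.dir a b ↔ dir0 a b)
    (hbi : ∀ a b, G0.bi a b ↔ bi0 a b) {T : Set Vtx} (hT : G0.Reachable T)
    (hW : Vtx.W ∈ T) (hY : Vtx.Y ∈ T) : Vtx.A2 ∈ T := by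
  by_contra hA2
  have hrnd : Vtx.A2 ∈ G0.rnd := by simp [G0_rnd_eq_univ G0 hdir hbi]
  refine (hT.fixable_induce_insert ⟨hrnd, hA2⟩).2 ⟨.Y, by simp, .single ?_, .head (b := .W) ?_ (.single ?_)⟩
  · exact ⟨(hdir _ _).2 (by simp [dir0]), by simp, by simp [hY]⟩
  · exact ⟨(hbi _ _).2 (by simp [bi0]), by simp, by simp [hW]⟩
  · exact ⟨(hbi _ _).2 (by simp [bi0]), by simp [hW], by simp [hY]⟩

lemma G0_Ystar_eq (G0 : CADMG Vtx) (hdir : ∀ a b, G0.dir a b ↔ dir0 a b) :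
    G0.Ystar {Vtx.A2} {Vtx.Y} = {Vtx.Y, Vtx.A1, Vtx.W} := by
  have hY : Vtx.Y ∈ G0.Ystar {Vtx.A2} {Vtx.Y} := subset_Ystar _ _ rfl
  have hA1 : Vtx.A1 ∈ G0.Ystar {Vtx.A2} {Vtx.Y} :=
    mem_Ystar_of_dir ((hdir _ _).2 (by simp [dir0])) (by simp) (by simp) hY
  have hW : Vtx.W ∈ G0.Ystar {Vtx.A2} {Vtx.Y} :=
    mem_Ystar_of_dir ((hdir _ _).2 (by simp [dir0])) (by simp) (by simp) hA1
  have hA2 : Vtx.A2 ∉ G0.Ystar {Vtx.A2} {Vtx.Y} := fun h => by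
    simpa using mem_of_mem_Ystar_of_mem h rfl
  ext v
  cases v <;> simp [hY, hA1, hW, hA2]

lemma G0_district_induce (G0 : CADMG Vtx) (hdir : ∀ a b, G0.dir a b ↔ dir0 a b)
    (hbi : ∀ a b, G0.bi a b ↔ bi0 a b) :
    (G0.induce {Vtx.Y, Vtx.A1, Vtx.W}).District {Vtx.W, Vtx.Y} := by
  refine ⟨.W, ⟨by simp [G0_rnd_eq_univ G0 hdir hbi], by simp⟩, Set.Subset.antisymm ?_ ?_⟩
  · rintro w (rfl | rfl)
    · exact .refl
    · exact .single ⟨(hbi _ _).2 (by simp [bi0]), by simp, by simp⟩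
  · intro w hw
    induction hw with
    | refl => simp
    | tail _ e _ =>
      obtain ⟨e, -, hb⟩ := e
      rcases (hbi _ _).1 e with ⟨-, rfl⟩ | ⟨-, rfl⟩ | ⟨-, rfl⟩ | ⟨-, rfl⟩ <;> simp_all

end G0

theorem G0_district_not_intrinsic_general
    (G0 : CADMG Vtx)
    (hdir : ∀ a b, G0.dir a b ↔ dir0 a b) (hbi : ∀ a b, G0.bi a b ↔ bi0 a b) :
    ¬ G0.Reachable {Vtx.W, Vtx.Y} ∧
    G0.IsReachableClosure {Vtx.W, Vtx.Y} {Vtx.W, Vtx.Y, Vtx.A2} ∧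
    G0.Ystar {Vtx.A2} {Vtx.Y} = {Vtx.Y, Vtx.A1, Vtx.W} ∧
    (G0.induce (G0.Ystar {Vtx.A2} {Vtx.Y})).District {Vtx.W, Vtx.Y} ∧
    ¬ G0.Intrinsic {Vtx.W, Vtx.Y} := by
  have hA2 := @G0_A2_mem_of_reachable G0 hdir hbi
  have h_not_reach : ¬ G0.Reachable {Vtx.W, Vtx.Y} := fun h => by
    simpa using hA2 h (by simp) (by simp)
  have h_closure_reach : G0.Reachable {Vtx.W, Vtx.Y, Vtx.A2} := by
    have hA1 : G0.Fixable Vtx.A1 := CADMG.fixable_of_forall_not_bi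
      (by simp [G0_rnd_eq_univ G0 hdir hbi]) (fun v h => by simpa [bi0] using (hbi _ v).1 h)
    convert hA1.reachable_rnd_diff_singleton using 1
    ext v
    cases v <;> simp [G0_rnd_eq_univ G0 hdir hbi]
  refine ⟨h_not_reach, ⟨h_closure_reach, ?_, fun T hT hWY => ?_⟩, G0_Ystar_eq G0 hdir, ?_,
    fun h => h_not_reach h.1⟩
  · exact Set.insert_subset_insert (Set.singleton_subset_iff.2 (by simp))
  · have hW : Vtx.W ∈ T := hWY (by simp)
    have hY : Vtx.Y ∈ T := hWY (by simp)
    simpa [Set.insert_subset_iff, hW, hY] using hA2 hT hW hY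
  · rw [G0_Ystar_eq G0 hdir]
    exact G0_district_induce G0 hdir hbi

/-- In `G0`, the set `{W, Y}` is not reachable and its reachable closure is
`{W, Y, A2}`; for `Y' = {Y}`, `A' = {A2}` we have `Y'* = {Y, A1, W}`, and the district
`{W, Y}` of `(G0)_{Y'*}` is not an intrinsic set of `G0`. -/
theorem G0_district_not_intrinsic
    (G0 : CADMG Vtx) (hrnd : G0.rnd = Set.univ)
    (hdir : ∀ a b, G0.dir a b ↔ dir0 a b) (hbi : ∀ a b, G0.bi a b ↔ bi0 a b) :
    ¬ G0.Reachable {Vtx.W, Vtx.Y} ∧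
    G0.IsReachableClosure {Vtx.W, Vtx.Y} {Vtx.W, Vtx.Y, Vtx.A2} ∧
    G0.Ystar {Vtx.A2} {Vtx.Y} = {Vtx.Y, Vtx.A1, Vtx.W} ∧
    (G0.induce (G0.Ystar {Vtx.A2} {Vtx.Y})).District {Vtx.W, Vtx.Y} ∧
    ¬ G0.Intrinsic {Vtx.W, Vtx.Y} :=
  G0_district_not_intrinsic_general G0 hdir hbi
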